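/- The linearization M can be written as M(X) = X - ∫ L X L*, where L(e^{jθ}) := Λ_∘^{1/2} G (Ψ^{1/2}/(G*Λ_∘G)) G*, and this L satisfies ∫ L* L = I. Consequently -M(X) = ∫ L X L* - (1/2)[X L*L + L*L X] integrated over the circle, a Lindblad-form generator. -/

import Mathlib

open Matrix MeasureTheory Real Filter
open scoped ComplexOrder

noncomputable section

abbrev Mat (n : ℕ) := Matrix (Fin n) (Fin n) ℂ
abbrev Vec (n : ℕ) := Matrix (Fin n) (Fin 1) ℂ

/-- the point e^{jθ} on the unit circle -/
def circPt (θ : ℝ) : ℂ := Complex.exp (θ * Complex.I)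

/-- G(e^{jθ}) = (e^{jθ} I - A)⁻¹ B -/
def Gm {n : ℕ} (A : Mat n) (B : Vec n) (θ : ℝ) : Vec n :=
  (circPt θ • (1 : Mat n) - A)⁻¹ * B

/-- the scalar G* Λ G at e^{jθ} -/
def quad {n : ℕ} (A : Mat n) (B : Vec n) (Λ : Mat n) (θ : ℝ) : ℂ :=
  ((Gm A B θ)ᴴ * Λ * Gm A B θ) 0 0

/-- normalized entrywise matrix integral over the unit circle -/
def mInt {n : ℕ} (f : ℝ → Mat n) : Mat n :=
  Matrix.of fun i j => (1 / (2 * π) : ℝ) • ∫ θ in (0:ℝ)..(2 * π), f θ i j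

/-- normalized scalar (complex) integral over the unit circle -/
def sInt (f : ℝ → ℂ) : ℂ := (1 / (2 * π) : ℝ) • ∫ θ in (0:ℝ)..(2 * π), f θ

/-- normalized scalar (real) integral over the unit circle -/
def sIntR (f : ℝ → ℝ) : ℝ := (1 / (2 * π)) * ∫ θ in (0:ℝ)..(2 * π), f θ

/-- all eigenvalues of A lie in the open unit disc -/
def IsStable {n : ℕ} (A : Mat n) : Prop := ∀ μ ∈ spectrum ℂ A, ‖μ‖ < 1

/-- (A,B) is a reachable pair: the controllability matrix has full rank -/
def Reachable {n : ℕ} (A : Mat n) (B : Vec n) : Prop :=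
  (Matrix.of fun (i : Fin n) (k : Fin n) => (A ^ (k : ℕ) * B) i 0).rank = n

open scoped Classical in
/-- positive semidefinite square root (junk value 0 off the psd cone) -/
def msqrt {n : ℕ} (M : Mat n) : Mat n :=
  if h : M.PosSemidef then (h.1.eigenvectorUnitary : Mat n) *
    diagonal (((↑) : ℝ → ℂ) ∘ (Real.sqrt ∘ h.1.eigenvalues)) *
    (star h.1.eigenvectorUnitary : Mat n) else 0

/-- the moment map ∫ G (Ψ/(G*ΛG)) G* -/
def moment {n : ℕ} (A : Mat n) (B : Vec n) (Ψ : ℝ → ℝ) (Λ : Mat n) : Mat n :=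
  mInt (fun θ => ((Ψ θ : ℂ) / quad A B Λ θ) • (Gm A B θ * (Gm A B θ)ᴴ))

/-- the iteration map Θ(Λ) = ∫ Λ^{1/2} G (Ψ/(G*ΛG)) G* Λ^{1/2} -/
def Theta {n : ℕ} (A : Mat n) (B : Vec n) (Ψ : ℝ → ℝ) (Λ : Mat n) : Mat n :=
  mInt (fun θ => ((Ψ θ : ℂ) / quad A B Λ θ) •
    (msqrt Λ * (Gm A B θ * (Gm A B θ)ᴴ) * msqrt Λ))

/-- the linearization M of Θ at Λ:
M(X) = X - Λ^{1/2} ∫ (GΨG*/(G*ΛG)) (G*XG/(G*ΛG)) Λ^{1/2} -/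
def Mlin {n : ℕ} (A : Mat n) (B : Vec n) (Ψ : ℝ → ℝ) (Λ : Mat n) (X : Mat n) : Mat n :=
  X - msqrt Λ * mInt (fun θ =>
    (((Ψ θ : ℂ) * (((Gm A B θ)ᴴ * X * Gm A B θ) 0 0)) / (quad A B Λ θ) ^ 2) •
      (Gm A B θ * (Gm A B θ)ᴴ)) * msqrt Λ

/-- the range of the operator Γ : Φ ↦ ∫ G Φ G* on continuous (2π-periodic) functions -/
def RangeGamma {n : ℕ} (A : Mat n) (B : Vec n) : Set (Mat n) :=
  {M | ∃ Φ : ℝ → ℝ, Continuous Φ ∧ (∀ θ, Φ (θ + 2 * π) = Φ θ) ∧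
    M = mInt (fun θ => (Φ θ : ℂ) • (Gm A B θ * (Gm A B θ)ᴴ))}

/-- The matrix-valued function L = Λ^{1/2} G (Ψ^{1/2}/(G*ΛG)) G*. -/
def Lmap {n : ℕ} (A : Mat n) (B : Vec n) (Ψ : ℝ → ℝ) (Λ : Mat n) (θ : ℝ) : Mat n :=
  ((Real.sqrt (Ψ θ) : ℂ) / quad A B Λ θ) • (msqrt Λ * (Gm A B θ * (Gm A B θ)ᴴ))

/-! Since `G(e^{jθ})` is a column, the rank-one matrix `P = G G*` satisfies `P X P = (G* X G) P`.
Writing `L = c Λ^{1/2} P` with `c = Ψ^{1/2}/(G*ΛG)` and `|c|² = Ψ/(G*ΛG)²` (the quadratic form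
`G*ΛG` is real), this gives pointwise `L X L* = Λ^{1/2} (Ψ (G*XG)/(G*ΛG)²) P Λ^{1/2}`, the integrand
of `M`, and `L*L = |c|² P Λ P = (Ψ/(G*ΛG)) P`, the integrand of the moment condition. Stability of
`A` makes all integrands continuous, so the integral commutes with `Y ↦ Λ^{1/2} Y Λ^{1/2}` and with
`Y ↦ (X Y + Y X)/2`; the latter turns `∫ L*L = I` into the Lindblad form. -/

section MatrixIntegral

-- Any norm on matrices will do: it only serves to form Bochner integrals.
attribute [local instance] Matrix.normedAddCommGroup Matrix.normedSpace

variable {n : ℕ}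

lemma mInt_eq_smul_intervalIntegral {f : ℝ → Mat n} (hf : Continuous f) :
    mInt f = (1 / (2 * π) : ℝ) • ∫ θ in (0:ℝ)..(2 * π), f θ := by
  ext i j
  let entry : Mat n →L[ℝ] ℂ := LinearMap.toContinuousLinearMap (entryLinearMap ℝ ℂ i j)
  simp only [mInt, Matrix.of_apply, Matrix.smul_apply]
  exact congrArg _ (entry.intervalIntegral_comp_comm (hf.intervalIntegrable (μ := volume) _ _))

lemma mInt_sub {f g : ℝ → Mat n} (hf : Continuous f) (hg : Continuous g) :
    mInt (fun θ => f θ - g θ) = mInt f - mInt g := by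
  rw [mInt_eq_smul_intervalIntegral (f := fun θ => f θ - g θ) (hf.sub hg),
    mInt_eq_smul_intervalIntegral hf, mInt_eq_smul_intervalIntegral hg,
    intervalIntegral.integral_sub (hf.intervalIntegrable _ _) (hg.intervalIntegrable _ _),
    smul_sub]

lemma mInt_linearMap {f : ℝ → Mat n} (hf : Continuous f) (Φ : Mat n →ₗ[ℝ] Mat n) :
    mInt (fun θ => Φ (f θ)) = Φ (mInt f) := by
  let Φc := LinearMap.toContinuousLinearMap Φ
  rw [mInt_eq_smul_intervalIntegral (f := fun θ => Φ (f θ)) (Φc.continuous.comp hf),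
    mInt_eq_smul_intervalIntegral hf, map_smul]
  exact congrArg _ (Φc.intervalIntegral_comp_comm (hf.intervalIntegrable _ _))

end MatrixIntegral

lemma neg_sub_mInt_eq_mInt_lindblad {n : ℕ} {L : ℝ → Mat n} (hL : Continuous L)
    (hLL : mInt (fun θ => (L θ)ᴴ * L θ) = 1) (X : Mat n) :
    -(X - mInt (fun θ => L θ * X * (L θ)ᴴ)) =
      mInt (fun θ => L θ * X * (L θ)ᴴ
        - ((1 : ℝ) / 2) • (X * ((L θ)ᴴ * L θ) + (L θ)ᴴ * L θ * X)) := by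
  let anticomm : Mat n →ₗ[ℝ] Mat n :=
    ((1 : ℝ) / 2) • (LinearMap.mulLeft ℝ X + LinearMap.mulRight ℝ X)
  have hU : Continuous fun θ => (L θ)ᴴ * L θ := by fun_prop
  calc -(X - mInt (fun θ => L θ * X * (L θ)ᴴ))
      = mInt (fun θ => L θ * X * (L θ)ᴴ) - anticomm (mInt fun θ => (L θ)ᴴ * L θ) := by
        rw [hLL]
        simp only [anticomm, LinearMap.smul_apply, LinearMap.add_apply, LinearMap.mulLeft_apply,
          LinearMap.mulRight_apply, Matrix.mul_one, Matrix.one_mul]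
        rw [← two_smul ℝ X, smul_smul]
        norm_num
    _ = mInt (fun θ => L θ * X * (L θ)ᴴ - anticomm ((L θ)ᴴ * L θ)) := by
        rw [mInt_sub (by fun_prop) (by fun_prop), mInt_linearMap hU]
    _ = _ := rfl

lemma Matrix.col_mul_row_mul_mul_col_mul_row {m α : Type*} [Fintype m] [CommSemiring α]
    (u : Matrix m (Fin 1) α) (v : Matrix (Fin 1) m α) (X : Matrix m m α) :
    u * v * X * (u * v) = (v * X * u) 0 0 • (u * v) := by
  have hscalar : v * X * u = (v * X * u) 0 0 • (1 : Matrix (Fin 1) (Fin 1) α) := by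
    ext i j
    fin_cases i; fin_cases j
    simp
  calc u * v * X * (u * v) = u * (v * X * u) * v := by simp only [Matrix.mul_assoc]
    _ = u * ((v * X * u) 0 0 • (1 : Matrix (Fin 1) (Fin 1) α)) * v := by rw [← hscalar]
    _ = (v * X * u) 0 0 • (u * v) := by rw [Matrix.mul_smul, Matrix.mul_one, Matrix.smul_mul]

lemma star_ofReal_sqrt_div_mul_self {r : ℝ} (hr : 0 ≤ r) {q : ℂ} (hq : star q = q) :
    star ((Real.sqrt r : ℂ) / q) * ((Real.sqrt r : ℂ) / q) = r / q ^ 2 := by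
  rw [star_div₀, hq, Complex.star_def, Complex.conj_ofReal, div_mul_div_comm,
    ← Complex.ofReal_mul, Real.mul_self_sqrt hr, sq]

section Msqrt

variable {n : ℕ} {M : Mat n}

lemma msqrt_conjTranspose (hM : M.PosSemidef) : (msqrt M)ᴴ = msqrt M := by
  rw [msqrt, dif_pos hM, conjTranspose_mul, conjTranspose_mul, diagonal_conjTranspose,
    ← star_eq_conjTranspose, ← star_eq_conjTranspose, star_star, Matrix.mul_assoc]
  congr 3
  funext i
  simp

lemma msqrt_mul_self (hM : M.PosSemidef) : msqrt M * msqrt M = M := by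
  conv_rhs => rw [hM.1.spectral_theorem, Unitary.conjStarAlgAut_apply]
  rw [msqrt, dif_pos hM]
  set U : Mat n := (hM.1.eigenvectorUnitary : Mat n)
  have hdiag : diagonal (((↑) : ℝ → ℂ) ∘ (Real.sqrt ∘ hM.1.eigenvalues)) *
      diagonal (((↑) : ℝ → ℂ) ∘ (Real.sqrt ∘ hM.1.eigenvalues))
      = diagonal (RCLike.ofReal ∘ hM.1.eigenvalues) := by
    rw [diagonal_mul_diagonal]
    congr 1
    funext i
    simp only [Function.comp_apply]
    rw [← Complex.ofReal_mul, Real.mul_self_sqrt (hM.eigenvalues_nonneg i)]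
    rfl
  have hU : star U * U = 1 := Unitary.star_mul_self_of_mem (SetLike.coe_mem _)
  calc _ = U * (diagonal (((↑) : ℝ → ℂ) ∘ (Real.sqrt ∘ hM.1.eigenvalues)) * (star U * U) *
        diagonal (((↑) : ℝ → ℂ) ∘ (Real.sqrt ∘ hM.1.eigenvalues))) * star U := by
        simp only [Matrix.mul_assoc]
    _ = _ := by rw [hU, Matrix.mul_one, hdiag]

end Msqrt

section Circle

variable {n : ℕ} {A : Mat n} {B : Vec n} {Ψ : ℝ → ℝ} {Λ : Mat n}

lemma det_circPt_smul_one_sub_ne_zero (hA : IsStable A) (θ : ℝ) :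
    (circPt θ • (1 : Mat n) - A).det ≠ 0 := by
  have hnorm : ‖circPt θ‖ = 1 := by simp [circPt, Complex.norm_exp_ofReal_mul_I]
  have hspec : circPt θ ∉ spectrum ℂ A := fun h => (hA _ h).ne hnorm
  rw [spectrum.mem_iff, not_not, Algebra.algebraMap_eq_smul_one,
    Matrix.isUnit_iff_isUnit_det] at hspec
  exact hspec.ne_zero

lemma continuous_Gm (hA : IsStable A) : Continuous (Gm A B) := by
  have hM : Continuous fun θ => circPt θ • (1 : Mat n) - A := by unfold circPt; fun_prop
  have hinv : Continuous fun θ => (circPt θ • (1 : Mat n) - A)⁻¹ := by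
    simp only [Matrix.inv_def, Ring.inverse_eq_inv']
    exact (hM.matrix_det.inv₀ (det_circPt_smul_one_sub_ne_zero hA)).smul hM.matrix_adjugate
  exact hinv.matrix_mul continuous_const

lemma continuous_quad (hA : IsStable A) : Continuous (quad A B Λ) := by
  have hG := continuous_Gm (B := B) hA
  unfold quad
  fun_prop

lemma star_quad (hΛ : Λ.IsHermitian) (θ : ℝ) : star (quad A B Λ θ) = quad A B Λ θ :=
  (isHermitian_conjTranspose_mul_mul (Gm A B θ) hΛ).apply 0 0

lemma continuous_Lmap (hA : IsStable A) (hΨ : Continuous Ψ) (hq : ∀ θ, quad A B Λ θ ≠ 0) :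
    Continuous (Lmap A B Ψ Λ) := by
  have hG := continuous_Gm (B := B) hA
  have hcoeff : Continuous fun θ => (Real.sqrt (Ψ θ) : ℂ) / quad A B Λ θ :=
    (Complex.continuous_ofReal.comp (Real.continuous_sqrt.comp hΨ)).div (continuous_quad hA) hq
  unfold Lmap
  fun_prop

end Circle


section Lmap

variable {n : ℕ} {A : Mat n} {B : Vec n} {Ψ : ℝ → ℝ} {Λ : Mat n}

lemma Lmap_conjTranspose (hΛ : Λ.PosSemidef) (θ : ℝ) :
    (Lmap A B Ψ Λ θ)ᴴ = star ((Real.sqrt (Ψ θ) : ℂ) / quad A B Λ θ) •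
      (Gm A B θ * (Gm A B θ)ᴴ * msqrt Λ) := by
  rw [Lmap, conjTranspose_smul, conjTranspose_mul, conjTranspose_mul, conjTranspose_conjTranspose,
    msqrt_conjTranspose hΛ]

lemma conjTranspose_Lmap_mul_Lmap (hΛ : Λ.PosSemidef) {θ : ℝ} (hΨ : 0 ≤ Ψ θ) :
    (Lmap A B Ψ Λ θ)ᴴ * Lmap A B Ψ Λ θ = ((Ψ θ : ℂ) / quad A B Λ θ) • (Gm A B θ * (Gm A B θ)ᴴ) := by
  set G := Gm A B θ
  set q := quad A B Λ θ
  calc (Lmap A B Ψ Λ θ)ᴴ * Lmap A B Ψ Λ θ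
      = (star ((Real.sqrt (Ψ θ) : ℂ) / q) * ((Real.sqrt (Ψ θ) : ℂ) / q)) •
          (G * Gᴴ * (msqrt Λ * msqrt Λ) * (G * Gᴴ)) := by
        rw [Lmap_conjTranspose hΛ, Lmap, smul_mul_smul_comm]
        simp only [G, q, Matrix.mul_assoc]
    _ = ((Ψ θ : ℂ) / q ^ 2 * q) • (G * Gᴴ) := by
        rw [msqrt_mul_self hΛ, star_ofReal_sqrt_div_mul_self hΨ (star_quad hΛ.1 θ),
          Matrix.col_mul_row_mul_mul_col_mul_row, smul_smul]
        rfl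
    _ = ((Ψ θ : ℂ) / q) • (G * Gᴴ) := by
        rcases eq_or_ne q 0 with hq | hq
        · simp [hq]
        · field_simp

lemma Lmap_mul_mul_conjTranspose (hΛ : Λ.PosSemidef) {θ : ℝ} (hΨ : 0 ≤ Ψ θ) (X : Mat n) :
    Lmap A B Ψ Λ θ * X * (Lmap A B Ψ Λ θ)ᴴ = msqrt Λ *
      (((Ψ θ : ℂ) * ((Gm A B θ)ᴴ * X * Gm A B θ) 0 0 / quad A B Λ θ ^ 2) •
        (Gm A B θ * (Gm A B θ)ᴴ)) * msqrt Λ := by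
  set G := Gm A B θ
  set q := quad A B Λ θ
  calc Lmap A B Ψ Λ θ * X * (Lmap A B Ψ Λ θ)ᴴ
      = (star ((Real.sqrt (Ψ θ) : ℂ) / q) * ((Real.sqrt (Ψ θ) : ℂ) / q)) •
          (msqrt Λ * (G * Gᴴ * X * (G * Gᴴ)) * msqrt Λ) := by
        rw [Lmap_conjTranspose hΛ, Lmap, smul_mul, smul_mul_smul_comm, mul_comm]
        simp only [G, q, Matrix.mul_assoc]
    _ = _ := by
        rw [star_ofReal_sqrt_div_mul_self hΨ (star_quad hΛ.1 θ),
          Matrix.col_mul_row_mul_mul_col_mul_row, Matrix.mul_smul, Matrix.smul_mul, smul_smul,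
          Matrix.mul_smul, Matrix.smul_mul, div_mul_eq_mul_div]

lemma mInt_conjTranspose_Lmap_mul_Lmap (hΛ : Λ.PosSemidef) (hΨ : ∀ θ, 0 ≤ Ψ θ) :
    mInt (fun θ => (Lmap A B Ψ Λ θ)ᴴ * Lmap A B Ψ Λ θ) = moment A B Ψ Λ :=
  congrArg mInt (funext fun θ => conjTranspose_Lmap_mul_Lmap hΛ (hΨ θ))

lemma Mlin_eq_sub_mInt (hA : IsStable A) (hΨc : Continuous Ψ) (hΨ : ∀ θ, 0 ≤ Ψ θ)
    (hΛ : Λ.PosSemidef) (hq : ∀ θ, quad A B Λ θ ≠ 0) (X : Mat n) :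
    Mlin A B Ψ Λ X = X - mInt (fun θ => Lmap A B Ψ Λ θ * X * (Lmap A B Ψ Λ θ)ᴴ) := by
  have hG := continuous_Gm (B := B) hA
  have hcoeff : Continuous fun θ =>
      (Ψ θ : ℂ) * ((Gm A B θ)ᴴ * X * Gm A B θ) 0 0 / quad A B Λ θ ^ 2 :=
    Continuous.div (by fun_prop) ((continuous_quad hA).pow 2) fun θ => pow_ne_zero 2 (hq θ)
  let conjBySqrt : Mat n →ₗ[ℝ] Mat n :=
    (LinearMap.mulRight ℝ (msqrt Λ)).comp (LinearMap.mulLeft ℝ (msqrt Λ))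
  rw [Mlin, funext fun θ => Lmap_mul_mul_conjTranspose hΛ (hΨ θ) X]
  exact congrArg _ (mInt_linearMap (hcoeff.smul (by fun_prop)) conjBySqrt).symm

end Lmap

theorem stmt15_general {n : ℕ} (A : Mat n) (B : Vec n) (Ψ : ℝ → ℝ) (Λ : Mat n)
    (hA : IsStable A)
    (hΨc : Continuous Ψ) (hΨpos : ∀ θ, 0 < Ψ θ)
    (hΛ : Λ.PosDef)
    (hq : ∀ θ, 0 < (quad A B Λ θ).re)
    (hmom : moment A B Ψ Λ = 1) :
    (∀ X : Mat n, X.IsHermitian →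
      Mlin A B Ψ Λ X =
        X - mInt (fun θ => Lmap A B Ψ Λ θ * X * (Lmap A B Ψ Λ θ)ᴴ)) ∧
    mInt (fun θ => (Lmap A B Ψ Λ θ)ᴴ * Lmap A B Ψ Λ θ) = 1 ∧
    (∀ X : Mat n, X.IsHermitian →
      -Mlin A B Ψ Λ X =
        mInt (fun θ => Lmap A B Ψ Λ θ * X * (Lmap A B Ψ Λ θ)ᴴ
          - ((1 : ℝ) / 2) • (X * ((Lmap A B Ψ Λ θ)ᴴ * Lmap A B Ψ Λ θ)
            + ((Lmap A B Ψ Λ θ)ᴴ * Lmap A B Ψ Λ θ) * X))) := by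
  have hΨ : ∀ θ, 0 ≤ Ψ θ := fun θ => (hΨpos θ).le
  have hq0 : ∀ θ, quad A B Λ θ ≠ 0 := fun θ h => by simpa [h] using hq θ
  have hMlin := Mlin_eq_sub_mInt hA hΨc hΨ hΛ.posSemidef hq0
  have hLL : mInt (fun θ => (Lmap A B Ψ Λ θ)ᴴ * Lmap A B Ψ Λ θ) = 1 :=
    (mInt_conjTranspose_Lmap_mul_Lmap hΛ.posSemidef hΨ).trans hmom
  refine ⟨fun X _ => hMlin X, hLL, fun X _ => ?_⟩
  rw [hMlin X]
  exact neg_sub_mInt_eq_mInt_lindblad (continuous_Lmap hA hΨc hq0) hLL X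

/-- M(X) = X - ∫ L X L*, with ∫ L*L = I, so that -M is a
Lindblad-form generator. -/
theorem stmt15 {n : ℕ} (A : Mat n) (B : Vec n) (Ψ : ℝ → ℝ) (Λ : Mat n)
    (hA : IsStable A) (hR : Reachable A B)
    (hΨc : Continuous Ψ) (hΨpos : ∀ θ, 0 < Ψ θ)
    (hΛ : Λ.PosDef)
    (hq : ∀ θ, 0 < (quad A B Λ θ).re)
    (hmom : moment A B Ψ Λ = 1) :
    (∀ X : Mat n, X.IsHermitian →
      Mlin A B Ψ Λ X =
        X - mInt (fun θ => Lmap A B Ψ Λ θ * X * (Lmap A B Ψ Λ θ)ᴴ)) ∧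
    mInt (fun θ => (Lmap A B Ψ Λ θ)ᴴ * Lmap A B Ψ Λ θ) = 1 ∧
    (∀ X : Mat n, X.IsHermitian →
      -Mlin A B Ψ Λ X =
        mInt (fun θ => Lmap A B Ψ Λ θ * X * (Lmap A B Ψ Λ θ)ᴴ
          - ((1 : ℝ) / 2) • (X * ((Lmap A B Ψ Λ θ)ᴴ * Lmap A B Ψ Λ θ)
            + ((Lmap A B Ψ Λ θ)ᴴ * Lmap A B Ψ Λ θ) * X))) :=
  stmt15_general A B Ψ Λ hA hΨc hΨpos hΛ hq hmom
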